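/- Let Ω and Ω' be positive semidefinite n×n complex matrices, let X be an n×n complex matrix with 0 ≤ X ≤ I, and let A be an n×n complex matrix with operator norm ‖A‖ ≤ 1. Then |trace(A (Ω^{1/2} X Ω^{1/2} − Ω'^{1/2} X Ω'^{1/2}))| ≤ ((trace Ω)^{1/2} + (trace Ω')^{1/2}) · ‖Ω^{1/2} − Ω'^{1/2}‖_F. -/

import Mathlib

/-!
With `B = Ω^{1/2}` and `C = Ω'^{1/2}` one has `A(BXB − CXC) = A(B − C)XB + ACX(B − C)`, so the
trace is a sum of two Frobenius inner products with the hermitian matrix `B − C`. By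
Cauchy–Schwarz they are bounded by `‖B − C‖_F` times `‖XBA‖_F` and `‖ACX‖_F`, and multiplying by
the contractions `X` and `A` on either side does not increase the Frobenius norm, which leaves
`‖B‖_F = (tr Ω)^{1/2}` and `‖C‖_F = (tr Ω')^{1/2}`.
-/

open Matrix ComplexOrder

namespace Matrix.PosSemidef

/-- The positive semidefinite square root of a positive semidefinite matrix (the definition
`Matrix.PosSemidef.sqrt` of the older Mathlib, since removed). -/
noncomputable def sqrt {n : Type*} [Fintype n] [DecidableEq n] {𝕜 : Type*} [RCLike 𝕜]
    {A : Matrix n n 𝕜} (hA : PosSemidef A) : Matrix n n 𝕜 :=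
  hA.1.eigenvectorUnitary.1 * diagonal ((↑) ∘ Real.sqrt ∘ hA.1.eigenvalues) *
  (star hA.1.eigenvectorUnitary : Matrix n n 𝕜)

variable {n : Type*} [Fintype n] [DecidableEq n] {𝕜 : Type*} [RCLike 𝕜] {A : Matrix n n 𝕜}

lemma posSemidef_sqrt (hA : PosSemidef A) : hA.sqrt.PosSemidef := by
  have hD : (diagonal ((↑) ∘ Real.sqrt ∘ hA.1.eigenvalues : n → 𝕜)).PosSemidef := by
    rw [posSemidef_diagonal_iff]
    exact fun i => RCLike.ofReal_nonneg.mpr (Real.sqrt_nonneg _)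
  simpa only [sqrt, star_eq_conjTranspose] using
    hD.mul_mul_conjTranspose_same hA.1.eigenvectorUnitary.1

lemma sqrt_mul_self (hA : PosSemidef A) : hA.sqrt * hA.sqrt = A := by
  set U : Matrix n n 𝕜 := hA.1.eigenvectorUnitary.1
  set S : Matrix n n 𝕜 := diagonal ((↑) ∘ Real.sqrt ∘ hA.1.eigenvalues)
  have hU : star U * U = 1 := Unitary.coe_star_mul_self hA.1.eigenvectorUnitary
  have hS : S * S = diagonal (RCLike.ofReal ∘ hA.1.eigenvalues) := by
    rw [diagonal_mul_diagonal]
    congr 1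
    funext i
    simp only [Function.comp_apply, ← RCLike.ofReal_mul,
      Real.mul_self_sqrt (hA.eigenvalues_nonneg i)]
  conv_rhs => rw [hA.1.spectral_theorem, Unitary.conjStarAlgAut_apply]
  calc hA.sqrt * hA.sqrt = U * S * (star U * U) * S * star U := by
        simp only [sqrt, U, S, Matrix.mul_assoc]
    _ = U * (S * S) * star U := by rw [hU, Matrix.mul_one, Matrix.mul_assoc U]
    _ = _ := by rw [hS]

lemma conjTranspose_sqrt_mul_sqrt (hA : PosSemidef A) : hA.sqrtᴴ * hA.sqrt = A := by
  rw [hA.posSemidef_sqrt.1.eq, hA.sqrt_mul_self]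

end Matrix.PosSemidef

namespace Matrix

variable {n : Type*} [Fintype n]

lemma trace_mul_sub_sandwich {R : Type*} [CommRing R] (A B C X : Matrix n n R) :
    (A * (B * X * B - C * X * C)).trace
      = ((B - C) * (X * B * A)).trace + ((B - C) * (A * C * X)).trace := by
  have split : A * (B * X * B - C * X * C) = A * ((B - C) * X * B) + A * C * X * (B - C) := by
    noncomm_ring
  rw [split, trace_add, trace_mul_comm A, trace_mul_comm (A * C * X), Matrix.mul_assoc (B - C),
    Matrix.mul_assoc (B - C)]

lemma norm_trace_conjTranspose_mul_le (M N : Matrix n n ℂ) :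
    ‖(Mᴴ * N).trace‖ ≤ √(Mᴴ * M).trace.re * √(Nᴴ * N).trace.re := by
  classical
  let _ := toMatrixSeminormedAddCommGroup (1 : Matrix n n ℂ) PosSemidef.one
  let _ := toMatrixInnerProductSpace (1 : Matrix n n ℂ) PosSemidef.one
  have inner_eq (P Q : Matrix n n ℂ) : inner ℂ P Q = (Pᴴ * Q).trace := by
    change (Q * 1 * Pᴴ).trace = _
    rw [Matrix.mul_one, trace_mul_comm]
  have h := norm_inner_le_norm (𝕜 := ℂ) M N
  rwa [@norm_eq_sqrt_re_inner ℂ _ _ _ _ M, @norm_eq_sqrt_re_inner ℂ _ _ _ _ N, inner_eq,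
    inner_eq, inner_eq] at h

section OperatorNorm

open scoped MatrixOrder Matrix.Norms.L2Operator

lemma re_trace_le_re_trace_of_le {M N : Matrix n n ℂ} (h : M ≤ N) : M.trace.re ≤ N.trace.re :=
  (Complex.le_def.mp ((tracePositiveLinearMap n ℝ ℂ).mono h)).1

variable [DecidableEq n]

lemma norm_toEuclideanCLM_le_one_of_posSemidef {X : Matrix n n ℂ} (hX0 : X.PosSemidef)
    (hX1 : (1 - X).PosSemidef) : ‖toEuclideanCLM (𝕜 := ℂ) X‖ ≤ 1 :=
  (CStarAlgebra.mem_Icc_iff_norm_le_one.mp ⟨hX0.nonneg, le_iff.mpr hX1⟩).2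

lemma conjTranspose_mul_self_le_one {K : Matrix n n ℂ} (hK : ‖toEuclideanCLM (𝕜 := ℂ) K‖ ≤ 1) :
    Kᴴ * K ≤ 1 := by
  rw [← CStarAlgebra.norm_le_one_iff_of_nonneg _ (posSemidef_conjTranspose_mul_self K).nonneg,
    ← star_eq_conjTranspose, CStarRing.norm_star_mul_self]
  exact mul_le_one₀ hK (norm_nonneg K) hK

lemma re_trace_conjTranspose_mul_self_mul_left_le {K : Matrix n n ℂ}
    (hK : ‖toEuclideanCLM (𝕜 := ℂ) K‖ ≤ 1) (M : Matrix n n ℂ) :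
    ((K * M)ᴴ * (K * M)).trace.re ≤ (Mᴴ * M).trace.re := by
  have h := star_left_conjugate_le_conjugate (conjTranspose_mul_self_le_one hK) M
  rw [star_eq_conjTranspose, Matrix.mul_one] at h
  rw [conjTranspose_mul, Matrix.mul_assoc, ← Matrix.mul_assoc Kᴴ, ← Matrix.mul_assoc]
  exact re_trace_le_re_trace_of_le h

lemma re_trace_conjTranspose_mul_self_mul_right_le {K : Matrix n n ℂ}
    (hK : ‖toEuclideanCLM (𝕜 := ℂ) K‖ ≤ 1) (M : Matrix n n ℂ) :
    ((M * K)ᴴ * (M * K)).trace.re ≤ (Mᴴ * M).trace.re := by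
  have hKH : ‖toEuclideanCLM (𝕜 := ℂ) Kᴴ‖ ≤ 1 := by
    rwa [← cstar_norm_def, ← star_eq_conjTranspose, norm_star]
  have h := re_trace_conjTranspose_mul_self_mul_left_le hKH Mᴴ
  rwa [← conjTranspose_mul, trace_mul_comm, conjTranspose_conjTranspose,
    trace_mul_comm Mᴴᴴ, conjTranspose_conjTranspose] at h

lemma re_trace_conjTranspose_mul_self_sandwich_le {K L : Matrix n n ℂ}
    (hK : ‖toEuclideanCLM (𝕜 := ℂ) K‖ ≤ 1) (hL : ‖toEuclideanCLM (𝕜 := ℂ) L‖ ≤ 1)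
    (M : Matrix n n ℂ) : ((K * M * L)ᴴ * (K * M * L)).trace.re ≤ (Mᴴ * M).trace.re := by
  rw [Matrix.mul_assoc]
  exact (re_trace_conjTranspose_mul_self_mul_left_le hK _).trans
    (re_trace_conjTranspose_mul_self_mul_right_le hL M)

end OperatorNorm

end Matrix

/-- For positive semidefinite `Ω`, `Ω'`, a matrix `0 ≤ X ≤ I` and `A` with operator norm
`‖A‖ ≤ 1`, one has
`|tr(A(Ω^{1/2}XΩ^{1/2} − Ω'^{1/2}XΩ'^{1/2}))| ≤ (√tr Ω + √tr Ω')·‖Ω^{1/2} − Ω'^{1/2}‖_F`. -/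
theorem stmt11 {n : ℕ} (Ω Ω' X A : Matrix (Fin n) (Fin n) ℂ)
    (hΩ : Ω.PosSemidef) (hΩ' : Ω'.PosSemidef)
    (hX0 : X.PosSemidef) (hX1 : (1 - X).PosSemidef)
    (hA : ‖Matrix.toEuclideanCLM (𝕜 := ℂ) A‖ ≤ 1) :
    ‖(A * (hΩ.sqrt * X * hΩ.sqrt - hΩ'.sqrt * X * hΩ'.sqrt)).trace‖
      ≤ (Real.sqrt Ω.trace.re + Real.sqrt Ω'.trace.re)
          * Real.sqrt (((hΩ.sqrt - hΩ'.sqrt)ᴴ * (hΩ.sqrt - hΩ'.sqrt)).trace.re) := by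
  set B := hΩ.sqrt
  set C := hΩ'.sqrt
  set d := √((B - C)ᴴ * (B - C)).trace.re
  have hD : (B - C)ᴴ = B - C := by
    rw [conjTranspose_sub, hΩ.posSemidef_sqrt.1.eq, hΩ'.posSemidef_sqrt.1.eq]
  have hX := norm_toEuclideanCLM_le_one_of_posSemidef hX0 hX1
  have bound (N P : Matrix (Fin n) (Fin n) ℂ) (hN : (Nᴴ * N).trace.re ≤ P.trace.re) :
      ‖((B - C) * N).trace‖ ≤ d * √P.trace.re := by
    conv_lhs => rw [← hD]
    exact (norm_trace_conjTranspose_mul_le _ N).trans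
      (mul_le_mul_of_nonneg_left (Real.sqrt_le_sqrt hN) (Real.sqrt_nonneg _))
  have hB := re_trace_conjTranspose_mul_self_sandwich_le hX hA B
  have hC := re_trace_conjTranspose_mul_self_sandwich_le hA hX C
  rw [hΩ.conjTranspose_sqrt_mul_sqrt] at hB
  rw [hΩ'.conjTranspose_sqrt_mul_sqrt] at hC
  calc _ = ‖((B - C) * (X * B * A)).trace + ((B - C) * (A * C * X)).trace‖ := by
        rw [trace_mul_sub_sandwich]
    _ ≤ d * √Ω.trace.re + d * √Ω'.trace.re :=
        (norm_add_le _ _).trans (add_le_add (bound _ _ hB) (bound _ _ hC))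
    _ = _ := by ring
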